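/- Let G=(V,E) be a d-manifold and let ψ:V→ℂ with Re ψ and Im ψ nowhere zero on V. Then for each of the 6 two-element subsets e of U={1+i,1−i,−1+i,−1−i}, the level set {ψ=0}_e is either the empty graph or a (d−2)-manifold. -/

import Mathlib

open scoped Classical

/-- A finite simple graph: a finite vertex set together with a symmetric, irreflexive
adjacency relation supported on the vertex set. -/
structure FGraph (V : Type) where
  verts : Finset V
  Adj : V → V → Prop
  symm : ∀ {a b}, Adj a b → Adj b a
  loopless : ∀ a, ¬ Adj a a
  mem_of_adj : ∀ {a b}, Adj a b → a ∈ verts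

namespace FGraph

variable {V W : Type}

/-- The subgraph induced on the vertices satisfying `P`. -/
noncomputable def induce (G : FGraph V) (P : V → Prop) : FGraph V where
  verts := G.verts.filter P
  Adj a b := G.Adj a b ∧ P a ∧ P b
  symm h := ⟨G.symm h.1, h.2.2, h.2.1⟩
  loopless a h := G.loopless a h.1
  mem_of_adj h := Finset.mem_filter.mpr ⟨G.mem_of_adj h.1, h.2.1⟩

/-- The unit sphere of a vertex: the subgraph induced on its neighbors. -/
noncomputable def unitSphere (G : FGraph V) (v : V) : FGraph V :=
  G.induce (fun w => G.Adj v w)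

/-- The graph with the vertex `v` (and its edges) removed. -/
noncomputable def erase (G : FGraph V) (v : V) : FGraph V :=
  G.induce (fun w => w ≠ v)

/-- Inductive definition of contractibility: the one-point graph is contractible, and a
graph is contractible if some vertex has a contractible unit sphere and contractible
complement. -/
inductive Contractible : FGraph V → Prop
  | single (G : FGraph V) (v : V) (h : G.verts = {v}) : Contractible G
  | step (G : FGraph V) (v : V) (hv : v ∈ G.verts)
      (h1 : Contractible (G.unitSphere v)) (h2 : Contractible (G.erase v)) :
      Contractible G

mutual
  /-- `G` is a `d`-sphere: the empty graph is the `(-1)`-sphere, and a `d`-manifold is a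
  `d`-sphere if removing some vertex renders it contractible. -/
  inductive IsSphere : ℤ → FGraph V → Prop
    | empty (G : FGraph V) (h : G.verts = ∅) : IsSphere (-1) G
    | punctured (d : ℤ) (G : FGraph V) (hm : IsManifold d G) (v : V) (hv : v ∈ G.verts)
        (hc : Contractible (G.erase v)) : IsSphere d G
  /-- For `d ≥ 0`, `G` is a `d`-manifold iff every unit sphere is a `(d-1)`-sphere. -/
  inductive IsManifold : ℤ → FGraph V → Prop
    | intro (d : ℤ) (hd : 0 ≤ d) (G : FGraph V)
        (h : ∀ v ∈ G.verts, IsSphere (d - 1) (G.unitSphere v)) : IsManifold d G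
end

/-- A simplex of `G`: the vertex set of a complete subgraph. -/
def IsSimplex (G : FGraph V) (x : Finset V) : Prop :=
  x.Nonempty ∧ ↑x ⊆ G.verts ∧ ∀ a ∈ x, ∀ b ∈ x, a ≠ b → G.Adj a b

/-- The Barycentric refinement: vertices are the simplices of `G`, two being adjacent iff
one is strictly contained in the other. -/
noncomputable def barycentric (G : FGraph V) : FGraph (Finset V) where
  verts := G.verts.powerset.filter (fun x => G.IsSimplex x)
  Adj x y := G.IsSimplex x ∧ G.IsSimplex y ∧ (x ⊂ y ∨ y ⊂ x)
  symm h := ⟨h.2.1, h.1, h.2.2.symm⟩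
  loopless x h := by rcases h.2.2 with h' | h' <;> exact (ssubset_irrefl x h')
  mem_of_adj h := Finset.mem_filter.mpr ⟨Finset.mem_powerset.mpr h.1.2.1, h.1⟩

/-- Number of simplices of `G` with exactly `j` vertices (so `numSimplices G (k+1)` is
the `f`-vector entry `f_k(G)`). -/
noncomputable def numSimplices (G : FGraph V) (j : ℕ) : ℕ :=
  (G.verts.powerset.filter (fun x => G.IsSimplex x ∧ x.card = j)).card

/-- Euler characteristic `χ(G) = Σ_{k ≥ 0} (-1)^k f_k(G)`, where `f_k` counts the
simplices with `k+1` vertices. -/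
noncomputable def euler (G : FGraph V) : ℤ :=
  ∑ k ∈ Finset.range G.verts.card, (-1 : ℤ) ^ k * G.numSimplices (k + 1)

/-- The level set `{f = c}`: the subgraph of the Barycentric refinement induced by the
simplices on which `f - c` changes sign. -/
noncomputable def levelSet (G : FGraph V) (f : V → ℝ) (c : ℝ) : FGraph (Finset V) :=
  G.barycentric.induce (fun x => (∃ a ∈ x, f a - c < 0) ∧ (∃ b ∈ x, 0 < f b - c))

/-- Graph isomorphism. -/
def Iso (G : FGraph V) (H : FGraph W) : Prop :=
  ∃ φ : V → W, Set.BijOn φ ↑G.verts ↑H.verts ∧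
    ∀ a ∈ G.verts, ∀ b ∈ G.verts, (G.Adj a b ↔ H.Adj (φ a) (φ b))

/-- Zykov join of two graphs: disjoint union plus all edges between the two parts. -/
noncomputable def join (G : FGraph V) (H : FGraph W) : FGraph (V ⊕ W) where
  verts := G.verts.disjSum H.verts
  Adj a b :=
    match a, b with
    | .inl a, .inl b => G.Adj a b
    | .inr a, .inr b => H.Adj a b
    | .inl a, .inr b => a ∈ G.verts ∧ b ∈ H.verts
    | .inr a, .inl b => b ∈ G.verts ∧ a ∈ H.verts
  symm {a b} h := by
    cases a <;> cases b <;> simp_all <;> first | exact G.symm h | exact H.symm h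
  loopless a h := by
    cases a <;> simp_all <;> first | exact G.loopless _ h | exact H.loopless _ h
  mem_of_adj {a b} h := by
    cases a <;> cases b <;> simp_all [Finset.mem_disjSum] <;>
      first | exact G.mem_of_adj h | exact H.mem_of_adj h

/-- Union of two graphs on the same vertex type. -/
noncomputable def union (G H : FGraph V) : FGraph V where
  verts := G.verts ∪ H.verts
  Adj a b := G.Adj a b ∨ H.Adj a b
  symm h := h.imp G.symm H.symm
  loopless a h := h.elim (G.loopless a) (H.loopless a)
  mem_of_adj h :=
    h.elim (fun h' => Finset.mem_union_left _ (G.mem_of_adj h'))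
      (fun h' => Finset.mem_union_right _ (H.mem_of_adj h'))

/-- A `d`-ball: a graph of the form `S - v` for a `d`-sphere `S` and a vertex `v` of `S`
(up to graph isomorphism). -/
def IsBall (d : ℤ) (H : FGraph W) : Prop :=
  ∃ (S : FGraph ℕ) (v : ℕ), IsSphere d S ∧ v ∈ S.verts ∧ Iso H (S.erase v)

/-- A `d`-manifold with boundary: every unit sphere is a `(d-1)`-sphere or a `(d-1)`-ball. -/
def IsManifoldWithBoundary (d : ℤ) (G : FGraph V) : Prop :=
  ∀ v ∈ G.verts, IsSphere (d - 1) (G.unitSphere v) ∨ IsBall (d - 1) (G.unitSphere v)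

/-- The cyclic graph `C_n` on the vertex set `Fin n`. -/
def cycleGraph (n : ℕ) : FGraph (Fin n) where
  verts := Finset.univ
  Adj a b := a ≠ b ∧ ((a.val + 1) % n = b.val ∨ (b.val + 1) % n = a.val)
  symm h := ⟨h.1.symm, h.2.symm⟩
  loopless a h := h.1 rfl
  mem_of_adj _ := Finset.mem_univ _

/-- `G` is a disjoint union of cyclic graphs `C_n` with `n ≥ 4`: the vertex set splits
into pairwise disjoint pieces, edges never cross between pieces, and each piece induces
a graph isomorphic to a `C_n` with `n ≥ 4`. -/
def IsDisjointUnionOfCycles (G : FGraph V) : Prop :=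
  ∃ P : Finset (Finset V),
    (∀ S ∈ P, ↑S ⊆ G.verts) ∧
    (∀ S ∈ P, ∀ T ∈ P, S ≠ T → Disjoint S T) ∧
    (∀ v ∈ G.verts, ∃ S ∈ P, v ∈ S) ∧
    (∀ a b, G.Adj a b → ∀ S ∈ P, a ∈ S → b ∈ S) ∧
    (∀ S ∈ P, ∃ n, 4 ≤ n ∧ Iso (G.induce (· ∈ S)) (cycleGraph n))

/-- Poincaré–Hopf index `i_f(v) = 1 - χ(S^-_f(v))`. -/
noncomputable def pindex (G : FGraph V) (f : V → ℝ) (v : V) : ℤ :=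
  1 - ((G.unitSphere v).induce (fun w => f w < f v)).euler

/-- Curvature `K(v) = Σ_{k ≥ 0} (-1)^k f_{k-1}(S(v))/(k+1)` with `f_{-1} = 1`. -/
noncomputable def curvature (G : FGraph V) (v : V) : ℝ :=
  ∑ k ∈ Finset.range (G.verts.card + 1),
    (-1 : ℝ) ^ k * (if k = 0 then 1 else ((G.unitSphere v).numSimplices k : ℝ)) / (k + 1)

end FGraph

/-- `sign(a + i b) = sign(a) + i sign(b)`. -/
noncomputable def csgn (z : ℂ) : ℂ :=
  ⟨Real.sign z.re, Real.sign z.im⟩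

/-- The set `U = {1+i, 1-i, -1+i, -1-i}` of possible values of `csgn`. -/
noncomputable def signU : Finset ℂ :=
  {1 + Complex.I, 1 - Complex.I, -1 + Complex.I, -1 - Complex.I}

namespace FGraph

variable {V : Type}

/-- The set of values of `sign(ψ - c)` attained on the finite vertex set `x`. -/
noncomputable def signValues (ψ : V → ℂ) (c : ℂ) (x : Finset V) : Finset ℂ :=
  x.image (fun v => csgn (ψ v - c))

/-- The level set `{ψ = c}` of a complex-valued function: the subgraph of the Barycentric
refinement induced by the simplices on which `sign(ψ - c)` takes at least three distinct
values, including `-1+i` and `1-i`. -/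
noncomputable def complexLevelSet (G : FGraph V) (ψ : V → ℂ) (c : ℂ) : FGraph (Finset V) :=
  G.barycentric.induce (fun x =>
    3 ≤ (signValues ψ c x).card ∧
    (-1 + Complex.I) ∈ signValues ψ c x ∧ (1 - Complex.I) ∈ signValues ψ c x)

/-- The level set `{ψ = 0}_e` for a two-element subset `e ⊆ U`: the subgraph of the
Barycentric refinement induced by the simplices on which `sign(ψ)` attains both values
of `e` and at least three distinct values in total. -/
noncomputable def complexLevelSetE (G : FGraph V) (ψ : V → ℂ) (e : Finset ℂ) :
    FGraph (Finset V) :=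
  G.barycentric.induce (fun x =>
    (∀ u ∈ e, u ∈ signValues ψ 0 x) ∧ 3 ≤ (signValues ψ 0 x).card)

/-- `Ψ^{-1}(t)`: the subgraph of the Barycentric refinement induced by the simplices on
which `sign(ψ)` attains all values of `t`. -/
noncomputable def signPreimage (G : FGraph V) (ψ : V → ℂ) (t : Finset ℂ) :
    FGraph (Finset V) :=
  G.barycentric.induce (fun x => ∀ u ∈ t, u ∈ signValues ψ 0 x)

/-- The sign vectors of `F - c` attained on the finite vertex set `x`. -/
noncomputable def vecSignValues {k : ℕ} (F : V → Fin k → ℝ) (c : Fin k → ℝ)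
    (x : Finset V) : Finset (Fin k → ℝ) :=
  x.image (fun v j => Real.sign (F v j - c j))

/-- The level set `{F = c}` of an `ℝ^k`-valued function: the subgraph of the Barycentric
refinement induced by the simplices on which the sign vector of `F - c` takes at least
`k+1` distinct values, including the `k` vectors `(1,…,1,-1,1,…,1)`. -/
noncomputable def vecLevelSet (G : FGraph V) {k : ℕ} (F : V → Fin k → ℝ) (c : Fin k → ℝ) :
    FGraph (Finset V) :=
  G.barycentric.induce (fun x =>
    k + 1 ≤ (vecSignValues F c x).card ∧
    ∀ j : Fin k, (fun i => if i = j then (-1 : ℝ) else 1) ∈ vecSignValues F c x)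

end FGraph

/-- The complete graph on `Fin n`. -/
def completeFGraph (n : ℕ) : FGraph (Fin n) where
  verts := Finset.univ
  Adj a b := a ≠ b
  symm h := h.symm
  loopless a h := h rfl
  mem_of_adj _ := Finset.mem_univ _

/-- Stirling numbers of the second kind. -/
def stirling2 : ℕ → ℕ → ℕ
  | 0, 0 => 1
  | 0, _ + 1 => 0
  | _ + 1, 0 => 0
  | n + 1, m + 1 => (m + 1) * stirling2 n (m + 1) + stirling2 n m


/-!
The level set is an induced subgraph of the Barycentric refinement, that is, the comparability
graph of a family of simplices. At a simplex `x` of the level set the unit sphere splits into the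
faces below `x` and the simplices above `x`; each of the former is contained in each of the
latter, so the unit sphere is a join. Split `x` into the three blocks `sign ψ = ε₁`,
`sign ψ = ε₂` and the rest. The faces below are the proper subsets of `x` meeting every block,
which form a sphere of dimension `|x| - 4`. The simplices above form a copy of the Barycentric
refinement of the link of `x`, and in a `d`-manifold this link is a `(d - |x|)`-sphere. A join of
a `p`-sphere and a `q`-sphere is a `(p + q + 1)`-sphere, so every unit sphere is a `(d - 3)`-sphere.

Both sphere statements are proved by induction through the same join decomposition of unit
spheres. The punctured graphs are shown to be contractible by attaching vertices one at a time
along contractible links, and these links are cones.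
-/

open Relation

namespace FGraph

variable {V : Type}

theorem ext {G H : FGraph V} (hv : G.verts = H.verts) (ha : ∀ a b, G.Adj a b ↔ H.Adj a b) :
    G = H := by
  cases G; cases H
  congr
  exact funext₂ fun a b => propext (ha a b)

@[simp] theorem induce_verts (G : FGraph V) (P : V → Prop) :
    (G.induce P).verts = G.verts.filter P := rfl

@[simp] theorem induce_adj (G : FGraph V) (P : V → Prop) {a b : V} :
    (G.induce P).Adj a b ↔ G.Adj a b ∧ P a ∧ P b := Iff.rfl

theorem induce_verts_subset (G : FGraph V) (P : V → Prop) : (G.induce P).verts ⊆ G.verts :=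
  fun _ ha => (Finset.mem_filter.mp ha).1

section Spheres

theorem IsSphere.neg_one_le {d : ℤ} {G : FGraph V} (h : IsSphere d G) : -1 ≤ d := by
  cases h with
  | empty => rfl
  | punctured _ _ hm => cases hm; omega

theorem IsSphere.isManifold {d : ℤ} {G : FGraph V} (h : IsSphere d G) (hne : G.verts.Nonempty) :
    IsManifold d G := by
  cases h with
  | empty _ h => simp [h] at hne
  | punctured _ _ hm => exact hm

theorem IsManifold.nonneg {d : ℤ} {G : FGraph V} (h : IsManifold d G) : 0 ≤ d := by
  cases h with
  | intro _ hd => exact hd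

theorem IsManifold.isSphere_unitSphere {d : ℤ} {G : FGraph V} (h : IsManifold d G) {v : V}
    (hv : v ∈ G.verts) : IsSphere (d - 1) (G.unitSphere v) := by
  cases h with
  | intro _ _ _ h => exact h v hv

theorem isManifold_of_isSphere_unitSphere {d : ℤ} {G : FGraph V} (hne : G.verts.Nonempty)
    (h : ∀ v ∈ G.verts, IsSphere (d - 1) (G.unitSphere v)) : IsManifold d G := by
  obtain ⟨v, hv⟩ := hne
  have := (h v hv).neg_one_le
  exact IsManifold.intro d (by omega) G h

end Spheres

section Simplices

theorem IsSimplex.mono {G : FGraph V} {w w' : Finset V} (h : G.IsSimplex w) (hsub : w' ⊆ w)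
    (hne : w'.Nonempty) : G.IsSimplex w' :=
  ⟨hne, fun _ ha => h.2.1 (hsub ha), fun a ha b hb => h.2.2 a (hsub ha) b (hsub hb)⟩

theorem isSimplex_singleton {G : FGraph V} {u : V} (hu : u ∈ G.verts) : G.IsSimplex {u} :=
  ⟨Finset.singleton_nonempty u, by simpa using hu, by simp⟩

noncomputable def link (G : FGraph V) (w : Finset V) : FGraph V :=
  G.induce fun a => ∀ b ∈ w, G.Adj b a

theorem link_singleton (G : FGraph V) (v : V) : G.link {v} = G.unitSphere v := by
  simp [link, unitSphere]

theorem link_insert {G : FGraph V} {v : V} {w : Finset V} (hvw : ∀ c ∈ w, G.Adj v c) :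
    G.link (insert v w) = (G.unitSphere v).link w := by
  apply ext
  · ext a
    simp only [link, unitSphere, induce_verts, Finset.mem_filter, Finset.forall_mem_insert,
      induce_adj]
    grind
  · intro a b
    simp only [link, unitSphere, induce_adj, Finset.forall_mem_insert]
    grind

theorem isSimplex_union_iff {G : FGraph V} {w t : Finset V} (hw : G.IsSimplex w)
    (hwt : Disjoint w t) (ht : t.Nonempty) :
    G.IsSimplex (w ∪ t) ↔ (G.link w).IsSimplex t := by
  have hne : ∀ {a b}, a ∈ w → b ∈ t → a ≠ b := fun ha hb h =>
    Finset.disjoint_left.mp hwt ha (h ▸ hb)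
  simp only [IsSimplex, link, induce_verts, induce_adj, Finset.subset_iff,
    Finset.mem_filter, Finset.mem_union]
  constructor
  · rintro ⟨-, hV, hadj⟩
    exact ⟨ht, fun a ha => ⟨hV (Or.inr ha), fun b hb => hadj b (.inl hb) a (.inr ha) (hne hb ha)⟩,
      fun a ha b hb hab => ⟨hadj a (.inr ha) b (.inr hb) hab,
        fun c hc => hadj c (.inl hc) a (.inr ha) (hne hc ha),
        fun c hc => hadj c (.inl hc) b (.inr hb) (hne hc hb)⟩⟩
  · rintro ⟨-, hV, hadj⟩
    refine ⟨hw.1.mono Finset.subset_union_left,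
      fun a ha => ha.elim (fun ha => hw.2.1 ha) (fun ha => (hV ha).1), ?_⟩
    rintro a (ha | ha) b (hb | hb) hab
    · exact hw.2.2 a ha b hb hab
    · exact (hV hb).2 a ha
    · exact G.symm ((hV ha).2 b hb)
    · exact (hadj a ha b hb hab).1

theorem isSimplex_erase_iff {G : FGraph V} {u : V} {w : Finset V} :
    (G.erase u).IsSimplex w ↔ G.IsSimplex w ∧ u ∉ w := by
  simp only [IsSimplex, erase, induce_verts, induce_adj, Finset.subset_iff, Finset.mem_filter]
  constructor
  · rintro ⟨hne, hV, hadj⟩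
    exact ⟨⟨hne, fun a ha => (hV ha).1, fun a ha b hb hab => (hadj a ha b hb hab).1⟩,
      fun hu => (hV hu).2 rfl⟩
  · rintro ⟨⟨hne, hV, hadj⟩, hu⟩
    have hne' : ∀ {a}, a ∈ w → a ≠ u := fun ha h => hu (h ▸ ha)
    exact ⟨hne, fun a ha => ⟨hV ha, hne' ha⟩,
      fun a ha b hb hab => ⟨hadj a ha b hb hab, hne' ha, hne' hb⟩⟩

theorem IsManifold.isSphere_link {d : ℤ} {G : FGraph V} (hG : IsManifold d G) {w : Finset V}
    (hw : G.IsSimplex w) : IsSphere (d - w.card) (G.link w) := by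
  induction w using Finset.induction_on generalizing G d with
  | empty => exact absurd hw.1 (by simp)
  | insert v w hvw ih =>
    have hv : v ∈ G.verts := hw.2.1 (Finset.mem_insert_self v w)
    have hS := hG.isSphere_unitSphere hv
    rcases w.eq_empty_or_nonempty with rfl | hne
    · simpa [link_singleton] using hS
    have hvw' : ∀ c ∈ w, G.Adj v c := fun c hc =>
      hw.2.2 v (Finset.mem_insert_self v w) c (Finset.mem_insert_of_mem hc) fun h => hvw (h ▸ hc)
    have hwS : (G.unitSphere v).IsSimplex w := by
      rw [← link_singleton, ← isSimplex_union_iff (isSimplex_singleton hv)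
        (Finset.disjoint_singleton_left.mpr hvw) hne]
      simpa using hw
    obtain ⟨a, ha⟩ := hne
    rw [link_insert hvw', Finset.card_insert_of_notMem hvw]
    convert ih (hS.isManifold ⟨a, hwS.2.1 ha⟩) hwS using 1
    push_cast
    ring

end Simplices

section CompGraph

noncomputable def compGraph (A : Finset (Finset V)) : FGraph (Finset V) where
  verts := A
  Adj y z := y ∈ A ∧ z ∈ A ∧ SymmGen (fun a b : Finset V => a ⊂ b) y z
  symm h := ⟨h.2.1, h.1, h.2.2.symm⟩
  loopless y h := h.2.2.elim (lt_irrefl y) (lt_irrefl y)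
  mem_of_adj h := h.1

variable {A B : Finset (Finset V)}

@[simp] theorem compGraph_verts (A : Finset (Finset V)) : (compGraph A).verts = A := rfl

@[simp] theorem compGraph_adj {y z : Finset V} :
    (compGraph A).Adj y z ↔ y ∈ A ∧ z ∈ A ∧ SymmGen (· ⊂ ·) y z := Iff.rfl

theorem not_symmGen_ssubset_self (y : Finset V) : ¬ SymmGen (· ⊂ ·) y y :=
  fun h => h.elim (lt_irrefl y) (lt_irrefl y)

theorem compGraph_induce (A : Finset (Finset V)) (P : Finset V → Prop) :
    (compGraph A).induce P = compGraph (A.filter P) := by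
  refine ext rfl fun y z => ?_
  simp only [induce_adj, compGraph_adj, Finset.mem_filter]
  tauto

theorem unitSphere_compGraph {y : Finset V} (hy : y ∈ A) :
    (compGraph A).unitSphere y = compGraph (A.filter (SymmGen (· ⊂ ·) y)) := by
  rw [unitSphere, compGraph_induce]
  congr 1
  exact Finset.filter_congr fun z hz => by simp [hy, hz]

theorem erase_compGraph (A : Finset (Finset V)) (y : Finset V) :
    (compGraph A).erase y = compGraph (A.erase y) := by
  rw [erase, compGraph_induce]
  congr 1
  ext z
  simp [and_comm]

theorem barycentric_eq_compGraph (G : FGraph V) :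
    G.barycentric = compGraph G.barycentric.verts := by
  refine ext rfl fun y z => ?_
  simp only [barycentric, compGraph_adj, Finset.mem_filter, Finset.mem_powerset]
  exact ⟨fun h => ⟨⟨h.1.2.1, h.1⟩, ⟨h.2.1.2.1, h.2.1⟩, h.2.2⟩,
    fun h => ⟨h.1.2, h.2.1.2, h.2.2⟩⟩

@[simp] theorem mem_barycentric_verts {G : FGraph V} {x : Finset V} :
    x ∈ G.barycentric.verts ↔ G.IsSimplex x := by
  simp only [barycentric, Finset.mem_filter, Finset.mem_powerset, and_iff_right_iff_imp]
  exact fun h => h.2.1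

theorem filter_symmGen_ssubset (A : Finset (Finset V)) (y : Finset V) :
    A.filter (SymmGen (· ⊂ ·) y) = A.filter (· ⊂ y) ∪ A.filter (y ⊂ ·) := by
  rw [← Finset.filter_or]
  exact Finset.filter_congr fun z _ => Or.comm

theorem unitSphere_compGraph_union {v : Finset V} (hAB : ∀ a ∈ A, ∀ b ∈ B, SymmGen (· ⊂ ·) a b)
    (hv : v ∈ A) :
    (compGraph (A ∪ B)).unitSphere v = compGraph (A.filter (SymmGen (· ⊂ ·) v) ∪ B) := by
  rw [unitSphere_compGraph (Finset.mem_union_left _ hv), Finset.filter_union,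
    Finset.filter_true_of_mem (hAB v hv)]

theorem erase_compGraph_union {v : Finset V} (hAB : ∀ a ∈ A, ∀ b ∈ B, SymmGen (· ⊂ ·) a b)
    (hv : v ∈ A) : (compGraph (A ∪ B)).erase v = compGraph (A.erase v ∪ B) := by
  rw [erase_compGraph, Finset.erase_union_distrib,
    Finset.erase_eq_of_notMem fun h => not_symmGen_ssubset_self v (hAB v hv v h)]

end CompGraph

section Contractible

variable {A B : Finset (Finset V)}

theorem contractible_compGraph_of_apex {v : Finset V} (hv : v ∈ A)
    (h : ∀ z ∈ A, z ≠ v → SymmGen (· ⊂ ·) v z) : Contractible (compGraph A) := by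
  induction A using Finset.strongInduction with
  | H A ih =>
  by_cases hA : A = {v}
  · exact .single _ v hA
  obtain ⟨w, hw, hwv⟩ : ∃ w ∈ A, w ≠ v := by
    by_contra! h'
    exact hA (Finset.eq_singleton_iff_unique_mem.mpr ⟨hv, h'⟩)
  refine .step _ w hw ?_ ?_
  · rw [unitSphere_compGraph hw]
    exact ih _ (Finset.filter_ssubset.mpr ⟨w, hw, not_symmGen_ssubset_self w⟩)
      (Finset.mem_filter.mpr ⟨hv, (h w hw hwv).symm⟩)
      fun z hz hzv => h z (Finset.mem_filter.mp hz).1 hzv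
  · rw [erase_compGraph]
    exact ih _ (Finset.erase_ssubset hw) (Finset.mem_erase.mpr ⟨hwv.symm, hv⟩)
      fun z hz hzv => h z (Finset.mem_of_mem_erase hz) hzv

theorem contractible_compGraph_of_isLeast {v : Finset V} (h : IsLeast (A : Set (Finset V)) v) :
    Contractible (compGraph A) :=
  contractible_compGraph_of_apex h.1 fun _ hz hzv => .of_rel (lt_of_le_of_ne (h.2 hz) (Ne.symm hzv))

theorem contractible_compGraph_of_isGreatest {v : Finset V}
    (h : IsGreatest (A : Set (Finset V)) v) : Contractible (compGraph A) :=
  contractible_compGraph_of_apex h.1 fun _ hz hzv => .of_rel_symm (lt_of_le_of_ne (h.2 hz) hzv)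

theorem Contractible.compGraph_union (hA : Contractible (compGraph A))
    (hAB : ∀ a ∈ A, ∀ b ∈ B, SymmGen (· ⊂ ·) a b) : Contractible (compGraph (A ∪ B)) := by
  generalize hG : compGraph A = G at hA
  induction hA generalizing A with
  | single G v hv =>
    subst hG
    obtain rfl : A = {v} := hv
    refine contractible_compGraph_of_apex (v := v) (by simp) fun z hz hzv => ?_
    exact hAB v (Finset.mem_singleton_self v) z (by simpa [hzv] using hz)
  | step G v hv _ _ ih₁ ih₂ =>
    subst hG
    refine .step _ v (Finset.mem_union_left _ hv) ?_ ?_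
    · rw [unitSphere_compGraph_union hAB hv]
      exact ih₁ (fun a ha => hAB a (Finset.mem_filter.mp ha).1) (unitSphere_compGraph hv).symm
    · rw [erase_compGraph_union hAB hv]
      exact ih₂ (fun a ha => hAB a (Finset.mem_of_mem_erase ha)) (erase_compGraph A v).symm

/-- The members of `B` are attached to `A` one at a time, in increasing order of `r`. -/
theorem contractible_compGraph_union_of_links (r : Finset V → ℤ)
    (hr : ∀ ⦃y z : Finset V⦄, y ⊂ z → r y ≠ r z) (hA : Contractible (compGraph A))
    (hAB : Disjoint A B)
    (hlink : ∀ u ∈ B, Contractible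
      (compGraph ((A ∪ B.filter (r · < r u)).filter (SymmGen (· ⊂ ·) u)))) :
    Contractible (compGraph (A ∪ B)) := by
  induction B using Finset.strongInduction with
  | H B ih =>
  rcases B.eq_empty_or_nonempty with rfl | hB
  · simpa using hA
  obtain ⟨u, hu, hmax⟩ := Finset.exists_max_image B r hB
  have hr' : ∀ z ∈ B, SymmGen (· ⊂ ·) u z → r z < r u := fun z hz h =>
    lt_of_le_of_ne (hmax z hz) (h.elim (fun h => (hr h).symm) (fun h => hr h))
  refine .step _ u (Finset.mem_union_right _ hu) ?_ ?_
  · rw [unitSphere_compGraph (Finset.mem_union_right _ hu)]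
    convert hlink u hu using 2
    ext z
    simp only [Finset.mem_filter, Finset.mem_union]
    exact ⟨fun ⟨h, h'⟩ => ⟨h.imp_right fun h => ⟨h, hr' z h h'⟩, h'⟩,
      fun ⟨h, h'⟩ => ⟨h.imp_right And.left, h'⟩⟩
  · rw [erase_compGraph, Finset.erase_union_distrib,
      Finset.erase_eq_of_notMem (Finset.disjoint_right.mp hAB hu)]
    refine ih _ (Finset.erase_ssubset hu) (hAB.mono_right (Finset.erase_subset u B))
      fun w hw => ?_
    convert hlink w (Finset.mem_of_mem_erase hw) using 4
    ext z
    simp only [Finset.mem_filter, Finset.mem_erase]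
    exact ⟨fun h => ⟨h.1.2, h.2⟩, fun h => ⟨⟨fun hzu => (hzu ▸ h.2).not_ge
      (hmax w (Finset.mem_of_mem_erase hw)), h.1⟩, h.2⟩⟩

theorem contractible_compGraph_union_of_below (hA : Contractible (compGraph A))
    (hBA : ∀ u ∈ B, ∀ z ∈ A, ¬ u ⊆ z)
    (hlink : ∀ u ∈ B, Contractible (compGraph (A.filter (· ⊂ u)))) :
    Contractible (compGraph (A ∪ B)) := by
  refine contractible_compGraph_union_of_links (fun z => -(z.card : ℤ))
    (fun y z h => by have := Finset.card_lt_card h; omega) hA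
    (Finset.disjoint_right.mpr fun u hu huA => hBA u hu u huA le_rfl) fun u hu => ?_
  rw [Finset.filter_union, Finset.filter_congr (q := (· ⊂ u)) fun z hz =>
    ⟨fun h => h.elim (fun h => absurd h.subset (hBA u hu z hz)) id, .of_rel_symm⟩]
  refine (hlink u hu).compGraph_union fun a ha b hb => .of_rel ?_
  simp only [Finset.mem_filter] at ha hb
  refine ha.2.trans (hb.2.resolve_right fun h => ?_)
  have := Finset.card_lt_card h
  omega

theorem contractible_compGraph_union_of_above (hA : Contractible (compGraph A))
    (hBA : ∀ u ∈ B, ∀ z ∈ A, ¬ z ⊆ u)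
    (hlink : ∀ u ∈ B, Contractible (compGraph (A.filter (u ⊂ ·)))) :
    Contractible (compGraph (A ∪ B)) := by
  refine contractible_compGraph_union_of_links (fun z => (z.card : ℤ))
    (fun y z h => by have := Finset.card_lt_card h; omega) hA
    (Finset.disjoint_right.mpr fun u hu huA => hBA u hu u huA le_rfl) fun u hu => ?_
  rw [Finset.filter_union, Finset.filter_congr (q := (u ⊂ ·)) fun z hz =>
    ⟨fun h => h.elim id fun h => absurd h.subset (hBA u hu z hz), .of_rel⟩]
  refine (hlink u hu).compGraph_union fun a ha b hb => .of_rel_symm ?_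
  simp only [Finset.mem_filter] at ha hb
  refine (hb.2.resolve_left fun h => ?_).trans ha.2
  have := Finset.card_lt_card h
  omega

theorem IsSphere.compGraph_union {p q : ℤ}
    (hAB : ∀ a ∈ A, ∀ b ∈ B, SymmGen (· ⊂ ·) a b) (hA : IsSphere p (compGraph A))
    (hB : IsSphere q (compGraph B)) : IsSphere (p + q + 1) (compGraph (A ∪ B)) := by
  induction hn : A.card + B.card using Nat.strong_induction_on generalizing A B p q with
  | _ n ih =>
  have hBA : ∀ b ∈ B, ∀ a ∈ A, SymmGen (· ⊂ ·) b a := fun b hb a ha => (hAB a ha b hb).symm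
  cases hA with
  | empty _ h =>
    obtain rfl : A = ∅ := h
    simpa using hB
  | punctured _ _ hmA vA hvA hcA =>
  cases hB with
  | empty _ h =>
    obtain rfl : B = ∅ := h
    simpa using IsSphere.punctured p _ hmA vA hvA hcA
  | punctured _ _ hmB vB hvB hcB =>
  refine .punctured _ _ (isManifold_of_isSphere_unitSphere ⟨vA, Finset.mem_union_left _ hvA⟩
    fun w hw => ?_) vA (Finset.mem_union_left _ hvA) ?_
  · rcases Finset.mem_union.mp hw with hw | hw
    · have hS := hmA.isSphere_unitSphere hw
      rw [unitSphere_compGraph hw] at hS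
      rw [unitSphere_compGraph_union hAB hw, show p + q + 1 - 1 = p - 1 + q + 1 by ring]
      exact ih _ (by have := Finset.card_lt_card (Finset.filter_ssubset.mpr
        ⟨w, hw, not_symmGen_ssubset_self w⟩); omega) (fun a ha => hAB a (Finset.mem_filter.mp ha).1)
        hS (.punctured q _ hmB vB hvB hcB) rfl
    · have hS := hmB.isSphere_unitSphere hw
      rw [unitSphere_compGraph hw] at hS
      rw [Finset.union_comm, unitSphere_compGraph_union hBA hw, Finset.union_comm,
        show p + q + 1 - 1 = p + (q - 1) + 1 by ring]
      exact ih _ (by have := Finset.card_lt_card (Finset.filter_ssubset.mpr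
        ⟨w, hw, not_symmGen_ssubset_self w⟩); omega)
        (fun a ha b hb => hAB a ha b (Finset.mem_filter.mp hb).1)
        (.punctured p _ hmA vA hvA hcA) hS rfl
  · rw [erase_compGraph_union hAB hvA]
    rw [erase_compGraph] at hcA
    exact hcA.compGraph_union fun a ha => hAB a (Finset.mem_of_mem_erase ha)

theorem IsSphere.unitSphere_compGraph {A : Finset (Finset V)} {y : Finset V} {p q : ℤ}
    (hy : y ∈ A) (hlow : IsSphere p (compGraph (A.filter (· ⊂ y))))
    (hup : IsSphere q (compGraph (A.filter (y ⊂ ·)))) :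
    IsSphere (p + q + 1) ((compGraph A).unitSphere y) := by
  rw [FGraph.unitSphere_compGraph hy, filter_symmGen_ssubset]
  refine hlow.compGraph_union (fun a ha b hb => .of_rel ?_) hup
  exact (Finset.mem_filter.mp ha).2.trans (Finset.mem_filter.mp hb).2

end Contractible

section Hitting

variable {M b y P : Finset V} {L : List (Finset V)}

structure IsBlockPartition (M b : Finset V) (L : List (Finset V)) : Prop where
  subset : b ⊆ M
  block_subset : ∀ s ∈ L, s ⊆ M
  cover : ∀ a ∈ M, a ∉ b → ∃ s ∈ L, a ∈ s
  disjoint : ∀ s ∈ L, Disjoint b s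
  nonempty : ∀ s ∈ L, s.Nonempty
  pairwise : L.Pairwise Disjoint

theorem IsBlockPartition.eq_of_mem (hL : IsBlockPartition M b L) {s t : Finset V} (hs : s ∈ L)
    (ht : t ∈ L) {a : V} (has : a ∈ s) (hat : a ∈ t) : s = t := by
  by_contra hst
  exact Finset.disjoint_left.mp (hL.pairwise.forall hs ht hst) has hat

theorem IsBlockPartition.cons_union {s : Finset V} (hL : IsBlockPartition M b (s :: L)) :
    IsBlockPartition M (b ∪ s) L where
  subset := Finset.union_subset hL.subset (hL.block_subset s List.mem_cons_self)
  block_subset t ht := hL.block_subset t (List.mem_cons_of_mem s ht)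
  cover a ha hab := by
    obtain ⟨t, ht, hat⟩ := hL.cover a ha fun h => hab (Finset.mem_union_left s h)
    rcases List.mem_cons.mp ht with rfl | ht
    · exact absurd (Finset.mem_union_right b hat) hab
    · exact ⟨t, ht, hat⟩
  disjoint t ht := Finset.disjoint_union_left.mpr
    ⟨hL.disjoint t (List.mem_cons_of_mem s ht), (List.pairwise_cons.mp hL.pairwise).1 t ht⟩
  nonempty t ht := hL.nonempty t (List.mem_cons_of_mem s ht)
  pairwise := (List.pairwise_cons.mp hL.pairwise).2

theorem IsBlockPartition.card_eq (hL : IsBlockPartition M b L) :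
    M.card = b.card + (L.map Finset.card).sum := by
  induction L generalizing b with
  | nil =>
    obtain rfl : M = b := Finset.Subset.antisymm
      (fun a ha => by_contra fun hab => by simpa using hL.cover a ha hab) hL.subset
    simp
  | cons s L ih =>
    rw [ih hL.cons_union, Finset.card_union_of_disjoint (hL.disjoint s List.mem_cons_self)]
    simp [add_assoc]

theorem IsBlockPartition.restrict (hL : IsBlockPartition M b L) (hby : b ⊆ y) (hyM : y ⊆ M)
    (hmeet : ∀ s ∈ L, (s ∩ y).Nonempty) : IsBlockPartition y b (L.map (· ∩ y)) where
  subset := hby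
  block_subset := by simp
  cover a ha hab := by
    obtain ⟨s, hs, has⟩ := hL.cover a (hyM ha) hab
    exact ⟨s ∩ y, List.mem_map_of_mem hs, Finset.mem_inter.mpr ⟨has, ha⟩⟩
  disjoint := by
    simpa using fun s hs => (hL.disjoint s hs).mono_right Finset.inter_subset_left
  nonempty := by simpa using hmeet
  pairwise :=
    hL.pairwise.map _ fun _ _ h => h.mono Finset.inter_subset_left Finset.inter_subset_left

theorem isBlockPartition_sdiff (hyM : y ⊆ M) (hne : y ≠ M) : IsBlockPartition M y [M \ y] where
  subset := hyM
  block_subset := by simp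
  cover a ha hay := ⟨M \ y, List.mem_singleton_self _, Finset.mem_sdiff.mpr ⟨ha, hay⟩⟩
  disjoint := by simpa using Finset.disjoint_sdiff
  nonempty := by simpa using Finset.sdiff_nonempty.mpr fun h => hne (Finset.Subset.antisymm hyM h)
  pairwise := List.pairwise_singleton _ _

def IsTransversal (u : Finset V) (L : List (Finset V)) : Prop :=
  ∀ s ∈ L, ∃ a, s ∩ u = {a}

theorem IsTransversal.map_inter {u : Finset V} (hu : IsTransversal u L) (huy : u ⊆ y) :
    IsTransversal u (L.map (· ∩ y)) := by
  simp only [IsTransversal, List.mem_map, forall_exists_index, and_imp]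
  rintro _ s hs rfl
  rw [Finset.inter_assoc, Finset.inter_eq_right.mpr huy]
  exact hu s hs

theorem IsBlockPartition.exists_transversal (hL : IsBlockPartition M b L) :
    ∃ u ⊆ M, IsTransversal u L := by
  rcases isEmpty_or_nonempty V with hV | hV
  · refine ⟨∅, Finset.empty_subset M, fun s hs => ?_⟩
    obtain ⟨a, -⟩ := hL.nonempty s hs
    exact isEmptyElim a
  choose! f hf using hL.nonempty
  refine ⟨(L.map f).toFinset, fun a ha => ?_, fun s hs => ⟨f s, ?_⟩⟩
  · obtain ⟨s, hs, rfl⟩ := List.mem_map.mp (List.mem_toFinset.mp ha)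
    exact hL.block_subset s hs (hf s hs)
  · ext a
    simp only [Finset.mem_inter, List.mem_toFinset, List.mem_map, Finset.mem_singleton]
    constructor
    · rintro ⟨has, t, ht, rfl⟩
      rw [hL.eq_of_mem hs ht has (hf t ht)]
    · rintro rfl
      exact ⟨hf s hs, s, hs, rfl⟩

noncomputable def hittingFamily (M b : Finset V) (L : List (Finset V)) (P : Finset V) :
    Finset (Finset V) :=
  M.powerset.filter fun y => b ⊆ y ∧ (∀ s ∈ L, (s ∩ y).Nonempty) ∧ ¬ P ⊆ y

theorem mem_hittingFamily :
    y ∈ hittingFamily M b L P ↔ y ⊆ M ∧ b ⊆ y ∧ (∀ s ∈ L, (s ∩ y).Nonempty) ∧ ¬ P ⊆ y := by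
  simp [hittingFamily]

theorem contractible_compGraph_hittingFamily (hbM : b ⊆ M) (hPb : ¬ P ⊆ b)
    (hLM : ∀ s ∈ L, s ⊆ M) (hLP : ∀ s ∈ L, ¬ s ⊆ P) :
    Contractible (compGraph (hittingFamily M b L P)) := by
  induction L generalizing b with
  | nil =>
    refine contractible_compGraph_of_isLeast (v := b)
      ⟨?_, fun y hy => (mem_hittingFamily.mp hy).2.1⟩
    exact mem_hittingFamily.mpr ⟨hbM, subset_rfl, by simp, hPb⟩
  | cons s L ih =>
    -- Members avoiding `c` are attached along cones with apex `insert c u`.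
    obtain ⟨c, hcs, hcP⟩ := Finset.not_subset.mp (hLP s List.mem_cons_self)
    have hcM := hLM s List.mem_cons_self hcs
    have hsplit : hittingFamily M b (s :: L) P = hittingFamily M (insert c b) L P ∪
        (hittingFamily M b (s :: L) P).filter (c ∉ ·) := by
      ext y
      simp only [Finset.mem_union, Finset.mem_filter, mem_hittingFamily, List.forall_mem_cons,
        Finset.insert_subset_iff]
      by_cases hcy : c ∈ y
      · simp only [hcy, true_and, not_true_eq_false, and_false, or_false]
        exact ⟨fun h => ⟨h.1, h.2.1, h.2.2.1.2, h.2.2.2⟩,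
          fun h => ⟨h.1, h.2.1, ⟨⟨c, Finset.mem_inter.mpr ⟨hcs, hcy⟩⟩, h.2.2.1⟩, h.2.2.2⟩⟩
      · simp [hcy]
    rw [hsplit]
    refine contractible_compGraph_union_of_above
      (ih (Finset.insert_subset hcM hbM) ((Finset.subset_insert_iff_of_notMem hcP).not.mpr hPb)
        (fun t ht => hLM t (List.mem_cons_of_mem s ht))
        fun t ht => hLP t (List.mem_cons_of_mem s ht))
      (fun u hu z hz hzu => ?_) fun u hu => ?_
    · exact (Finset.mem_filter.mp hu).2
        (hzu ((mem_hittingFamily.mp hz).2.1 (Finset.mem_insert_self c b)))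
    · obtain ⟨hu, hcu⟩ := Finset.mem_filter.mp hu
      obtain ⟨huM, hbu, hmeet, hPu⟩ := mem_hittingFamily.mp hu
      refine contractible_compGraph_of_isLeast (v := insert c u) ⟨?_, fun z hz => ?_⟩
      · refine Finset.mem_filter.mpr ⟨mem_hittingFamily.mpr ⟨Finset.insert_subset hcM huM,
          Finset.insert_subset_insert c hbu, fun t ht => (hmeet t (List.mem_cons_of_mem s ht)).mono
          (Finset.inter_subset_inter_left (Finset.subset_insert c u)),
          (Finset.subset_insert_iff_of_notMem hcP).not.mpr hPu⟩, Finset.ssubset_insert hcu⟩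
      · obtain ⟨hz, huz⟩ := Finset.mem_filter.mp hz
        exact Finset.insert_subset ((mem_hittingFamily.mp hz).2.1 (Finset.mem_insert_self c b))
          huz.subset

theorem IsBlockPartition.contractible_compGraph_hittingFamily {u : Finset V}
    (hL : IsBlockPartition M b L) (hu : IsTransversal u L) (hM : ¬ M ⊆ b ∪ u) :
    Contractible (compGraph (hittingFamily M b L u)) := by
  -- Points of `u` forming singleton blocks lie in every member and can be dropped from `u`;
  -- after that no block is contained in what is left of `u`.
  set S := u.filter fun a => {a} ∈ L
  have hforced : hittingFamily M b L u = hittingFamily M b L (u \ S) := by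
    ext y
    simp only [mem_hittingFamily]
    refine and_congr_right fun _ => and_congr_right fun _ => and_congr_right fun hmeet => ?_
    have hSy : S ⊆ y := fun a ha => by
      obtain ⟨x, hx⟩ := hmeet {a} (Finset.mem_filter.mp ha).2
      rw [Finset.mem_inter, Finset.mem_singleton] at hx
      exact hx.1 ▸ hx.2
    exact not_congr ⟨fun h => Finset.sdiff_subset.trans h, fun h a ha =>
      if haS : a ∈ S then hSy haS else h (Finset.mem_sdiff.mpr ⟨ha, haS⟩)⟩
  rw [hforced]
  refine FGraph.contractible_compGraph_hittingFamily hL.subset (fun h => ?_) hL.block_subset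
    fun s hs hsub => ?_
  · obtain ⟨c, hcM, hc⟩ := Finset.not_subset.mp hM
    obtain ⟨s, hs, hcs⟩ := hL.cover c hcM fun h => hc (Finset.mem_union_left u h)
    obtain ⟨a, ha⟩ := hu s hs
    obtain ⟨has, hau⟩ := Finset.mem_inter.mp (ha ▸ Finset.mem_singleton_self a)
    by_cases haS : a ∈ S
    · obtain rfl := hL.eq_of_mem hs (Finset.mem_filter.mp haS).2 has (Finset.mem_singleton_self a)
      exact hc (Finset.mem_union_right b (Finset.mem_singleton.mp hcs ▸ hau))
    · exact Finset.disjoint_left.mp (hL.disjoint s hs) (h (Finset.mem_sdiff.mpr ⟨hau, haS⟩)) has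
  · obtain ⟨a, ha⟩ := hu s hs
    have hsa : s = {a} := by
      rw [← ha, Finset.inter_eq_left.mpr (hsub.trans Finset.sdiff_subset)]
    have has : a ∈ s := hsa ▸ Finset.mem_singleton_self a
    exact (Finset.mem_sdiff.mp (hsub has)).2
      (Finset.mem_filter.mpr ⟨(Finset.mem_sdiff.mp (hsub has)).1, hsa ▸ hs⟩)

theorem filter_ssubset_hittingFamily (hyM : y ⊆ M) (hPy : P ⊆ y) :
    (hittingFamily M b L P).filter (· ⊂ y) = hittingFamily y b (L.map (· ∩ y)) P := by
  ext z
  simp only [Finset.mem_filter, mem_hittingFamily, List.forall_mem_map]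
  constructor
  · rintro ⟨⟨-, hbz, hmeet, hPz⟩, hzy⟩
    refine ⟨hzy.subset, hbz, fun s hs => ?_, hPz⟩
    rw [Finset.inter_assoc, Finset.inter_eq_right.mpr hzy.subset]
    exact hmeet s hs
  · rintro ⟨hzy, hbz, hmeet, hPz⟩
    refine ⟨⟨hzy.trans hyM, hbz, fun s hs => ?_, hPz⟩,
      ssubset_of_subset_of_ne hzy (by rintro rfl; exact hPz hPy)⟩
    simpa [Finset.inter_assoc, Finset.inter_eq_right.mpr hzy] using hmeet s hs

theorem filter_ssubset_hittingFamily_self (hyM : y ⊆ M) :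
    (hittingFamily M b L M).filter (· ⊂ y) = hittingFamily y b (L.map (· ∩ y)) y := by
  rw [← filter_ssubset_hittingFamily hyM subset_rfl]
  ext z
  simp only [Finset.mem_filter, mem_hittingFamily]
  constructor
  · rintro ⟨⟨h1, h2, h3, -⟩, hzy⟩
    exact ⟨⟨h1, h2, h3, not_subset_of_ssubset hzy⟩, hzy⟩
  · rintro ⟨⟨h1, h2, h3, -⟩, hzy⟩
    exact ⟨⟨h1, h2, h3, fun h => not_subset_of_ssubset hzy (hyM.trans h)⟩, hzy⟩

theorem filter_ssuperset_hittingFamily (hy : y ∈ hittingFamily M b L M) :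
    (hittingFamily M b L M).filter (y ⊂ ·) = hittingFamily M y [M \ y] M := by
  obtain ⟨hyM, hby, hmeet, -⟩ := mem_hittingFamily.mp hy
  ext z
  simp only [Finset.mem_filter, mem_hittingFamily, List.mem_singleton, forall_eq]
  constructor
  · rintro ⟨⟨hzM, -, -, hMz⟩, hyz⟩
    obtain ⟨a, haz, hay⟩ := Finset.exists_of_ssubset hyz
    exact ⟨hzM, hyz.subset, ⟨a, Finset.mem_inter.mpr ⟨Finset.mem_sdiff.mpr ⟨hzM haz, hay⟩, haz⟩⟩,
      hMz⟩
  · rintro ⟨hzM, hyz, ⟨a, ha⟩, hMz⟩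
    rw [Finset.mem_inter, Finset.mem_sdiff] at ha
    exact ⟨⟨hzM, hby.trans hyz, fun s hs => (hmeet s hs).mono (Finset.inter_subset_inter_left hyz),
      hMz⟩, ssubset_of_subset_of_ne hyz (by rintro rfl; exact ha.1.2 ha.2)⟩

theorem IsBlockPartition.contractible_compGraph_erase_hittingFamily {u : Finset V}
    (hL : IsBlockPartition M b L) (hu : IsTransversal u L) (huM : u ⊆ M) (hM : ¬ M ⊆ b ∪ u) :
    Contractible (compGraph ((hittingFamily M b L M).erase (b ∪ u))) := by
  have hsplit : (hittingFamily M b L M).erase (b ∪ u) = hittingFamily M b L u ∪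
      (hittingFamily M b L M).filter (fun y => u ⊆ y ∧ y ≠ b ∪ u) := by
    ext y
    simp only [Finset.mem_erase, Finset.mem_union, Finset.mem_filter, mem_hittingFamily]
    by_cases huy : u ⊆ y
    · tauto
    · have hyv : y ≠ b ∪ u := fun h => huy (h ▸ Finset.subset_union_right)
      have hMy : ¬ M ⊆ y := fun h => huy (huM.trans h)
      tauto
  rw [hsplit]
  refine contractible_compGraph_union_of_below (hL.contractible_compGraph_hittingFamily hu hM)
    (fun y hy z hz hyz => (mem_hittingFamily.mp hz).2.2.2 ((Finset.mem_filter.mp hy).2.1.trans hyz))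
    fun y hy => ?_
  obtain ⟨hyF, huy, hyv⟩ := Finset.mem_filter.mp hy
  obtain ⟨hyM, hby, hmeet, -⟩ := mem_hittingFamily.mp hyF
  rw [filter_ssubset_hittingFamily hyM huy]
  exact (hL.restrict hby hyM hmeet).contractible_compGraph_hittingFamily (hu.map_inter huy)
    fun h => hyv (Finset.Subset.antisymm h (Finset.union_subset hby huy))

theorem IsBlockPartition.hittingFamily_eq_empty (hL : IsBlockPartition M b L)
    (hall : ∀ s ∈ L, s.card = 1) : hittingFamily M b L M = ∅ := by
  refine Finset.eq_empty_iff_forall_notMem.mpr fun y hy => ?_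
  obtain ⟨-, hby, hmeet, hMy⟩ := mem_hittingFamily.mp hy
  refine hMy fun a ha => if hab : a ∈ b then hby hab else ?_
  obtain ⟨s, hs, has⟩ := hL.cover a ha hab
  obtain ⟨x, hx⟩ := hmeet s hs
  rw [Finset.mem_inter] at hx
  rw [Finset.card_le_one.mp (hall s hs).le a has x hx.1]
  exact hx.2

theorem IsBlockPartition.not_subset_union_transversal {u s : Finset V}
    (hL : IsBlockPartition M b L) (hu : IsTransversal u L) (hs : s ∈ L) (hs1 : s.card ≠ 1) :
    ¬ M ⊆ b ∪ u := by
  obtain ⟨a, ha⟩ := hu s hs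
  obtain ⟨c, hcs, hca⟩ := Finset.exists_mem_ne (s := s) (by
    have := (hL.nonempty s hs).card_pos; omega) a
  refine fun h => (Finset.mem_union.mp (h (hL.block_subset s hs hcs))).elim
    (fun hcb => Finset.disjoint_left.mp (hL.disjoint s hs) hcb hcs) fun hcu => hca ?_
  simpa [ha] using Finset.mem_inter.mpr ⟨hcs, hcu⟩

theorem IsBlockPartition.ssubset_of_mem_hittingFamily (hL : IsBlockPartition M b L)
    (hL0 : L ≠ []) (hy : y ∈ hittingFamily M b L M) : b ⊂ y := by
  obtain ⟨-, hby, hmeet, -⟩ := mem_hittingFamily.mp hy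
  obtain ⟨s, hs⟩ := List.exists_mem_of_ne_nil L hL0
  obtain ⟨a, ha⟩ := hmeet s hs
  rw [Finset.mem_inter] at ha
  exact ssubset_of_subset_of_ne hby fun h =>
    Finset.disjoint_left.mp (hL.disjoint s hs) (h ▸ ha.2) ha.1

theorem IsBlockPartition.isSphere_compGraph_hittingFamily (hL : IsBlockPartition M b L)
    (hL0 : L ≠ []) :
    IsSphere (M.card - b.card - L.length - 1) (compGraph (hittingFamily M b L M)) := by
  induction hn : M.card - b.card using Nat.strong_induction_on generalizing M b L with
  | _ n ih =>
  by_cases hall : ∀ s ∈ L, s.card = 1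
  · have hcard := hL.card_eq
    rw [List.sum_eq_card_nsmul _ 1 (by simpa using hall), List.length_map, smul_eq_mul,
      mul_one] at hcard
    rw [show (M.card : ℤ) - b.card - L.length - 1 = -1 by omega]
    exact .empty _ (hL.hittingFamily_eq_empty hall)
  obtain ⟨s₀, hs₀, hs₀1⟩ : ∃ s ∈ L, s.card ≠ 1 := by simpa using hall
  obtain ⟨u, huM, hu⟩ := hL.exists_transversal
  have hMu := hL.not_subset_union_transversal hu hs₀ hs₀1
  have hv : b ∪ u ∈ hittingFamily M b L M := by
    refine mem_hittingFamily.mpr ⟨Finset.union_subset hL.subset huM, Finset.subset_union_left,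
      fun s hs => ?_, hMu⟩
    obtain ⟨a, ha⟩ := hu s hs
    exact ⟨a, Finset.inter_subset_inter_left Finset.subset_union_right
      (ha ▸ Finset.mem_singleton_self a)⟩
  refine .punctured _ _ (isManifold_of_isSphere_unitSphere ⟨_, hv⟩ fun y hy => ?_) _ hv
    ((erase_compGraph _ _).symm ▸ hL.contractible_compGraph_erase_hittingFamily hu huM hMu)
  replace hy : y ∈ hittingFamily M b L M := hy
  obtain ⟨hyM, hby, hmeet, hMy⟩ := mem_hittingFamily.mp hy
  have hyM' : y ⊂ M := ssubset_of_subset_of_ne hyM fun h => hMy h.ge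
  have hby' := hL.ssubset_of_mem_hittingFamily hL0 hy
  have hlow := ih _ (by have := Finset.card_lt_card hyM'; have := Finset.card_le_card hby; omega)
    (hL.restrict hby hyM hmeet) (by simpa using hL0) rfl
  have hup := ih _ (by have := Finset.card_lt_card hby'; have := Finset.card_le_card hyM; omega)
    (isBlockPartition_sdiff hyM hyM'.ne) (List.cons_ne_nil _ _) rfl
  rw [← filter_ssubset_hittingFamily_self hyM, List.length_map] at hlow
  rw [← filter_ssuperset_hittingFamily hy] at hup
  convert hlow.unitSphere_compGraph hy hup using 1
  simp only [List.length_singleton, Nat.cast_one]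
  ring

end Hitting

section Refinement

variable {x y : Finset V} {L : FGraph V}

/-- When `x` is disjoint from the vertices of `L`, the comparability graph of this family is a
copy of the Barycentric refinement of `L`, every simplex being enlarged by `x`. -/
noncomputable def shiftedSimplices (x : Finset V) (L : FGraph V) : Finset (Finset V) :=
  (x ∪ L.verts).powerset.filter fun y => x ⊂ y ∧ L.IsSimplex (y \ x)

theorem mem_shiftedSimplices : y ∈ shiftedSimplices x L ↔ x ⊂ y ∧ L.IsSimplex (y \ x) := by
  simp only [shiftedSimplices, Finset.mem_filter, Finset.mem_powerset, and_iff_right_iff_imp]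
  refine fun ⟨_, h⟩ a ha => ?_
  by_cases hax : a ∈ x
  · exact Finset.mem_union_left _ hax
  · exact Finset.mem_union_right _ (h.2.1 (Finset.mem_sdiff.mpr ⟨ha, hax⟩))

theorem shiftedSimplices_empty (G : FGraph V) : shiftedSimplices ∅ G = G.barycentric.verts := by
  ext y
  simp only [mem_shiftedSimplices, Finset.sdiff_empty, mem_barycentric_verts,
    Finset.empty_ssubset, and_iff_right_iff_imp]
  exact fun h => h.1

theorem filter_ssuperset_shiftedSimplices (hy : y ∈ shiftedSimplices x L) :
    (shiftedSimplices x L).filter (y ⊂ ·) = shiftedSimplices y (L.link (y \ x)) := by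
  obtain ⟨hxy, hsy⟩ := mem_shiftedSimplices.mp hy
  have key : ∀ z, y ⊂ z → (L.IsSimplex (z \ x) ↔ (L.link (y \ x)).IsSimplex (z \ y)) :=
    fun z hyz => by
      rw [← isSimplex_union_iff hsy (Finset.disjoint_sdiff.mono_left Finset.sdiff_subset)
        (Finset.sdiff_nonempty.mpr (not_subset_of_ssubset hyz)), Finset.union_comm,
        Finset.sdiff_union_sdiff_cancel hyz.subset hxy.subset]
  ext z
  simp only [Finset.mem_filter, mem_shiftedSimplices]
  exact ⟨fun ⟨⟨_, h⟩, hyz⟩ => ⟨hyz, (key z hyz).mp h⟩,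
    fun ⟨hyz, h⟩ => ⟨⟨hxy.trans hyz, (key z hyz).mpr h⟩, hyz⟩⟩

theorem filter_ssubset_shiftedSimplices (hy : y ∈ shiftedSimplices x L) :
    (shiftedSimplices x L).filter (· ⊂ y) = hittingFamily y x [y \ x] y := by
  obtain ⟨hxy, hsy⟩ := mem_shiftedSimplices.mp hy
  ext z
  simp only [Finset.mem_filter, mem_shiftedSimplices, mem_hittingFamily, List.mem_singleton,
    forall_eq]
  constructor
  · rintro ⟨⟨hxz, -⟩, hzy⟩
    obtain ⟨a, haz, hax⟩ := Finset.exists_of_ssubset hxz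
    exact ⟨hzy.subset, hxz.subset, ⟨a, Finset.mem_inter.mpr
      ⟨Finset.mem_sdiff.mpr ⟨hzy.subset haz, hax⟩, haz⟩⟩, not_subset_of_ssubset hzy⟩
  · rintro ⟨hzy, hxz, ⟨a, ha⟩, hyz⟩
    obtain ⟨hay, hax⟩ := Finset.mem_sdiff.mp (Finset.mem_inter.mp ha).1
    have haz := (Finset.mem_inter.mp ha).2
    have hxz' : x ⊂ z := ssubset_of_subset_of_ne hxz (by rintro rfl; exact hax haz)
    exact ⟨⟨hxz', hsy.mono (Finset.sdiff_subset_sdiff hzy subset_rfl)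
      (Finset.sdiff_nonempty.mpr (not_subset_of_ssubset hxz'))⟩,
      ssubset_of_subset_of_ne hzy fun h => hyz h.ge⟩

theorem insert_mem_shiftedSimplices {u : V} (hx : Disjoint x L.verts) (hu : u ∈ L.verts) :
    insert u x ∈ shiftedSimplices x L := by
  have hux : u ∉ x := Finset.disjoint_right.mp hx hu
  rw [mem_shiftedSimplices, Finset.insert_sdiff_of_notMem _ hux, Finset.sdiff_self,
    insert_empty_eq]
  exact ⟨Finset.ssubset_insert hux, isSimplex_singleton hu⟩

theorem unitSphere_insert_compGraph_shiftedSimplices {u : V} (hx : Disjoint x L.verts)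
    (hu : u ∈ L.verts) :
    (compGraph (shiftedSimplices x L)).unitSphere (insert u x) =
      compGraph (shiftedSimplices (insert u x) (L.unitSphere u)) := by
  have hmem := insert_mem_shiftedSimplices hx hu
  have hux : u ∉ x := Finset.disjoint_right.mp hx hu
  rw [unitSphere_compGraph hmem, filter_symmGen_ssubset, filter_ssuperset_shiftedSimplices hmem,
    Finset.insert_sdiff_of_notMem _ hux, Finset.sdiff_self, insert_empty_eq, link_singleton,
    Finset.filter_false_of_mem, Finset.empty_union]
  intro z hz hzu
  have h1 := Finset.card_lt_card (mem_shiftedSimplices.mp hz).1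
  have h2 := Finset.card_lt_card hzu
  rw [Finset.card_insert_of_notMem hux] at h2
  omega

theorem disjoint_verts_link_sdiff (hx : Disjoint x L.verts) :
    Disjoint y (L.link (y \ x)).verts := by
  refine Finset.disjoint_left.mpr fun a hay ha => ?_
  simp only [link, induce_verts, Finset.mem_filter] at ha
  by_cases hax : a ∈ x
  · exact Finset.disjoint_left.mp hx hax ha.1
  · exact L.loopless a (ha.2 a (Finset.mem_sdiff.mpr ⟨hay, hax⟩))

theorem filter_notMem_shiftedSimplices {u : V} (hux : u ∉ x) :
    (shiftedSimplices x L).filter (u ∉ ·) = shiftedSimplices x (L.erase u) := by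
  ext y
  simp only [Finset.mem_filter, mem_shiftedSimplices, isSimplex_erase_iff, Finset.mem_sdiff, hux,
    not_false_eq_true, and_true]
  tauto

theorem contractible_compGraph_erase_shiftedSimplices {u : V} (hx : Disjoint x L.verts)
    (hu : u ∈ L.verts) (hc : Contractible (compGraph (shiftedSimplices x (L.erase u)))) :
    Contractible (compGraph ((shiftedSimplices x L).erase (insert u x))) := by
  have hux : u ∉ x := Finset.disjoint_right.mp hx hu
  have hsplit : (shiftedSimplices x L).erase (insert u x) = (shiftedSimplices x L).filter (u ∉ ·) ∪
      (shiftedSimplices x L).filter (fun y => u ∈ y ∧ y ≠ insert u x) := by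
    ext y
    simp only [Finset.mem_erase, Finset.mem_union, Finset.mem_filter]
    by_cases huy : u ∈ y
    · tauto
    · have : y ≠ insert u x := fun h => huy (h ▸ Finset.mem_insert_self u x)
      tauto
  rw [hsplit]
  refine contractible_compGraph_union_of_below ((filter_notMem_shiftedSimplices hux).symm ▸ hc)
    (fun y hy z hz hyz => (Finset.mem_filter.mp hz).2 (hyz (Finset.mem_filter.mp hy).2.1))
    fun y hy => contractible_compGraph_of_isGreatest (v := y.erase u) ⟨?_, fun z hz => ?_⟩
  · obtain ⟨hy, huy, hyu⟩ := Finset.mem_filter.mp hy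
    obtain ⟨hxy, hsy⟩ := mem_shiftedSimplices.mp hy
    have hxy' : x ⊂ y.erase u := ssubset_of_subset_of_ne
      (Finset.subset_erase.mpr ⟨hxy.subset, hux⟩) fun h => hyu (by rw [h, Finset.insert_erase huy])
    refine Finset.mem_filter.mpr ⟨Finset.mem_filter.mpr ⟨mem_shiftedSimplices.mpr ⟨hxy',
      hsy.mono (Finset.sdiff_subset_sdiff (Finset.erase_subset u y) subset_rfl)
        (Finset.sdiff_nonempty.mpr (not_subset_of_ssubset hxy'))⟩, Finset.notMem_erase u y⟩,
      Finset.erase_ssubset huy⟩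
  · obtain ⟨hz, hzy⟩ := Finset.mem_filter.mp hz
    exact Finset.subset_erase.mpr ⟨hzy.subset, (Finset.mem_filter.mp hz).2⟩

theorem Contractible.compGraph_shiftedSimplices (h : Contractible L) (hx : Disjoint x L.verts) :
    Contractible (compGraph (shiftedSimplices x L)) := by
  induction h generalizing x with
  | single L v hv =>
    have hvL : v ∈ L.verts := by simp [hv]
    refine .single _ (insert v x) (Finset.eq_singleton_iff_unique_mem.mpr
      ⟨insert_mem_shiftedSimplices hx hvL, fun y hy => ?_⟩)
    obtain ⟨hxy, hsy⟩ := mem_shiftedSimplices.mp hy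
    have hyx : y \ x = {v} := hsy.1.subset_singleton_iff.mp (hv ▸ hsy.2.1)
    rw [← Finset.union_sdiff_of_subset hxy.subset, hyx, Finset.union_comm, ← Finset.insert_eq]
  | step L u hu _ _ ih₁ ih₂ =>
    refine .step _ (insert u x) (insert_mem_shiftedSimplices hx hu) ?_ ?_
    · rw [unitSphere_insert_compGraph_shiftedSimplices hx hu]
      refine ih₁ (Finset.disjoint_insert_left.mpr ⟨fun h => L.loopless u ?_, ?_⟩)
      · exact (by simpa [unitSphere] using h : u ∈ L.verts ∧ L.Adj u u).2
      · exact hx.mono_right (induce_verts_subset _ _)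
    · rw [erase_compGraph]
      exact contractible_compGraph_erase_shiftedSimplices hx hu
        (ih₂ (hx.mono_right (induce_verts_subset _ _)))

theorem IsSphere.compGraph_shiftedSimplices {c : ℤ} (h : IsSphere c L) (hx : Disjoint x L.verts) :
    IsSphere c (compGraph (shiftedSimplices x L)) := by
  induction hn : (c + 1).toNat using Nat.strong_induction_on generalizing c L x with
  | _ n ih =>
  cases h with
  | empty _ hL =>
    refine .empty _ (Finset.eq_empty_iff_forall_notMem.mpr fun y hy => ?_)
    obtain ⟨a, ha⟩ := (mem_shiftedSimplices.mp hy).2.1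
    simpa [hL] using (mem_shiftedSimplices.mp hy).2.2.1 ha
  | punctured _ _ hm v hv hce =>
  have hmem := insert_mem_shiftedSimplices hx hv
  refine .punctured _ _ (isManifold_of_isSphere_unitSphere ⟨_, hmem⟩ fun y hy => ?_) _ hmem
    ((erase_compGraph _ _).symm ▸ contractible_compGraph_erase_shiftedSimplices hx hv
      (hce.compGraph_shiftedSimplices (hx.mono_right (induce_verts_subset _ _))))
  replace hy : y ∈ shiftedSimplices x L := hy
  obtain ⟨hxy, hsy⟩ := mem_shiftedSimplices.mp hy
  have hlow := (isBlockPartition_sdiff hxy.subset hxy.ne).isSphere_compGraph_hittingFamily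
    (List.cons_ne_nil _ _)
  rw [← filter_ssubset_shiftedSimplices hy] at hlow
  have hk : 0 < (y \ x).card := hsy.1.card_pos
  have hc := hm.nonneg
  have hup := ih _ (by omega) (hm.isSphere_link hsy) (disjoint_verts_link_sdiff hx) rfl
  rw [← filter_ssuperset_shiftedSimplices hy] at hup
  convert hlow.unitSphere_compGraph hy hup using 1
  have := Finset.card_sdiff_add_card_eq_card hxy.subset
  simp only [List.length_singleton, Nat.cast_one]
  omega

end Refinement

section LevelSet

variable {α : Type*} {σ : V → α} {ε₁ ε₂ : α} {x z : Finset V}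

def IsLevelSimplex (σ : V → α) (ε₁ ε₂ : α) (z : Finset V) : Prop :=
  ε₁ ∈ z.image σ ∧ ε₂ ∈ z.image σ ∧ 3 ≤ (z.image σ).card

theorem isLevelSimplex_iff (hε : ε₁ ≠ ε₂) : IsLevelSimplex σ ε₁ ε₂ z ↔
    (∃ a ∈ z, σ a = ε₁) ∧ (∃ a ∈ z, σ a = ε₂) ∧ ∃ a ∈ z, σ a ≠ ε₁ ∧ σ a ≠ ε₂ := by
  simp only [IsLevelSimplex, Finset.mem_image]
  refine and_congr_right fun h₁ => and_congr_right fun h₂ => ⟨fun h => ?_, ?_⟩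
  · by_contra! hall
    have hsub : z.image σ ⊆ {ε₁, ε₂} := fun e he => by
      obtain ⟨a, ha, rfl⟩ := Finset.mem_image.mp he
      by_cases h : σ a = ε₁
      · simp [h]
      · simp [hall a ha h]
    have := (Finset.card_le_card hsub).trans Finset.card_le_two
    omega
  · rintro ⟨a, ha, ha₁, ha₂⟩
    obtain ⟨a₁, ha₁z, rfl⟩ := h₁
    obtain ⟨a₂, ha₂z, rfl⟩ := h₂
    calc 3 = ({σ a₁, σ a₂, σ a} : Finset α).card := by
          rw [Finset.card_insert_of_notMem (by simp [hε, Ne.symm ha₁]),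
            Finset.card_pair (Ne.symm ha₂)]
      _ ≤ (z.image σ).card := Finset.card_le_card <|
          Finset.insert_subset (Finset.mem_image_of_mem σ ha₁z) <|
          Finset.insert_subset (Finset.mem_image_of_mem σ ha₂z) <|
          Finset.singleton_subset_iff.mpr (Finset.mem_image_of_mem σ ha)

theorem IsLevelSimplex.mono (h : IsLevelSimplex σ ε₁ ε₂ x) (hxz : x ⊆ z) :
    IsLevelSimplex σ ε₁ ε₂ z :=
  have hsub := Finset.image_subset_image (f := σ) hxz
  ⟨hsub h.1, hsub h.2.1, h.2.2.trans (Finset.card_le_card hsub)⟩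

noncomputable def levelBlocks (σ : V → α) (ε₁ ε₂ : α) (x : Finset V) : List (Finset V) :=
  [x.filter (σ · = ε₁), x.filter (σ · = ε₂), x.filter fun a => σ a ≠ ε₁ ∧ σ a ≠ ε₂]

theorem meets_levelBlocks_iff (hε : ε₁ ≠ ε₂) (hzx : z ⊆ x) :
    (∀ s ∈ levelBlocks σ ε₁ ε₂ x, (s ∩ z).Nonempty) ↔ IsLevelSimplex σ ε₁ ε₂ z := by
  have key : ∀ (p : V → Prop) [DecidablePred p], (x.filter p ∩ z).Nonempty ↔ ∃ a ∈ z, p a :=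
    fun p _ => ⟨fun ⟨a, ha⟩ => by
        simp only [Finset.mem_inter, Finset.mem_filter] at ha
        exact ⟨a, ha.2, ha.1.2⟩,
      fun ⟨a, ha, hpa⟩ => ⟨a, Finset.mem_inter.mpr ⟨Finset.mem_filter.mpr ⟨hzx ha, hpa⟩, ha⟩⟩⟩
  simp only [levelBlocks, List.forall_mem_cons, List.not_mem_nil, IsEmpty.forall_iff,
    implies_true, and_true]
  rw [key, key, key, isLevelSimplex_iff hε]

theorem isBlockPartition_levelBlocks (hε : ε₁ ≠ ε₂) (hx : IsLevelSimplex σ ε₁ ε₂ x) :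
    IsBlockPartition x ∅ (levelBlocks σ ε₁ ε₂ x) where
  subset := Finset.empty_subset x
  block_subset := by simp [levelBlocks]
  cover a ha _ := by
    by_cases h₁ : σ a = ε₁
    · exact ⟨_, List.mem_cons_self, Finset.mem_filter.mpr ⟨ha, h₁⟩⟩
    by_cases h₂ : σ a = ε₂
    · exact ⟨_, List.mem_cons_of_mem _ List.mem_cons_self, Finset.mem_filter.mpr ⟨ha, h₂⟩⟩
    · exact ⟨x.filter fun a => σ a ≠ ε₁ ∧ σ a ≠ ε₂, by simp [levelBlocks],
        Finset.mem_filter.mpr ⟨ha, h₁, h₂⟩⟩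
  disjoint := by simp
  nonempty s hs := ((meets_levelBlocks_iff hε subset_rfl).mpr hx s hs).mono Finset.inter_subset_left
  pairwise := by
    simp only [levelBlocks, List.pairwise_cons, List.mem_cons, List.not_mem_nil, or_false,
      forall_eq_or_imp, forall_eq, List.Pairwise.nil, Finset.disjoint_filter]
    exact ⟨⟨fun a _ h => h ▸ hε, fun a _ h h' => h'.1 h⟩, fun a _ h h' => h'.2 h, by simp⟩

theorem filter_ssubset_levelSimplices (hε : ε₁ ≠ ε₂) {G : FGraph V} (hsx : G.IsSimplex x) :
    (G.barycentric.verts.filter (IsLevelSimplex σ ε₁ ε₂)).filter (· ⊂ x) =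
      hittingFamily x ∅ (levelBlocks σ ε₁ ε₂ x) x := by
  ext z
  simp only [Finset.mem_filter, mem_barycentric_verts, mem_hittingFamily, Finset.empty_subset,
    true_and]
  constructor
  · rintro ⟨⟨-, hz⟩, hzx⟩
    exact ⟨hzx.subset, (meets_levelBlocks_iff hε hzx.subset).mpr hz, not_subset_of_ssubset hzx⟩
  · rintro ⟨hzx, hmeet, hxz⟩
    have hz := (meets_levelBlocks_iff hε hzx).mp hmeet
    obtain ⟨a, ha, -⟩ := ((isLevelSimplex_iff hε).mp hz).1
    exact ⟨⟨hsx.mono hzx ⟨a, ha⟩, hz⟩, ssubset_of_subset_of_ne hzx fun h => hxz h.ge⟩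

theorem filter_ssuperset_levelSimplices {G : FGraph V} (hsx : G.IsSimplex x)
    (hx : IsLevelSimplex σ ε₁ ε₂ x) :
    (G.barycentric.verts.filter (IsLevelSimplex σ ε₁ ε₂)).filter (x ⊂ ·) =
      shiftedSimplices x (G.link x) := by
  have hmem : x ∈ shiftedSimplices ∅ G := by rwa [shiftedSimplices_empty, mem_barycentric_verts]
  have h := filter_ssuperset_shiftedSimplices hmem
  rw [Finset.sdiff_empty, shiftedSimplices_empty] at h
  rw [← h, Finset.filter_filter]
  exact Finset.filter_congr fun z _ => ⟨fun h => h.2, fun h => ⟨hx.mono h.subset, h⟩⟩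

theorem IsManifold.isSphere_unitSphere_levelSet {d : ℤ} {G : FGraph V} (hG : IsManifold d G)
    (hε : ε₁ ≠ ε₂) (hx : x ∈ (G.barycentric.induce (IsLevelSimplex σ ε₁ ε₂)).verts) :
    IsSphere (d - 3) ((G.barycentric.induce (IsLevelSimplex σ ε₁ ε₂)).unitSphere x) := by
  rw [barycentric_eq_compGraph, compGraph_induce] at hx ⊢
  rw [compGraph_verts] at hx
  obtain ⟨hsx, hQx⟩ := Finset.mem_filter.mp hx
  rw [mem_barycentric_verts] at hsx
  have hlow := (isBlockPartition_levelBlocks hε hQx).isSphere_compGraph_hittingFamily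
    (List.cons_ne_nil _ _)
  have hup := (hG.isSphere_link hsx).compGraph_shiftedSimplices (x := x)
    (by simpa using disjoint_verts_link_sdiff (x := ∅) (y := x) (L := G) (by simp))
  rw [← filter_ssubset_levelSimplices hε hsx] at hlow
  rw [← filter_ssuperset_levelSimplices hsx hQx] at hup
  convert hlow.unitSphere_compGraph hx hup using 1
  simp only [levelBlocks, Finset.card_empty, List.length_cons, List.length_nil]
  ring

end LevelSet

theorem complexLevelSetE_pair (G : FGraph V) (ψ : V → ℂ) (ε₁ ε₂ : ℂ) :
    G.complexLevelSetE ψ {ε₁, ε₂} =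
      G.barycentric.induce (IsLevelSimplex (fun v => csgn (ψ v - 0)) ε₁ ε₂) := by
  simp only [complexLevelSetE, signValues, Finset.mem_insert,
    Finset.mem_singleton, forall_eq_or_imp, forall_eq, and_assoc]
  rfl

end FGraph

/-- If `G` is a `d`-manifold and `ψ : V → ℂ` has nowhere-vanishing real and
imaginary parts on `V`, then for each of the 6 two-element subsets `e` of
`U = {1+i,1-i,-1+i,-1-i}`, the level set `{ψ = 0}_e` is either the empty graph or a
`(d-2)`-manifold. -/
theorem morse_sard_complex_all_flavors {V : Type} (G : FGraph V) (d : ℤ)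
    (hG : FGraph.IsManifold d G) (ψ : V → ℂ)
    (hψ : ∀ v ∈ G.verts, (ψ v).re ≠ 0 ∧ (ψ v).im ≠ 0) :
    ∀ e ⊆ signU, e.card = 2 →
      (G.complexLevelSetE ψ e).verts = ∅ ∨
        FGraph.IsManifold (d - 2) (G.complexLevelSetE ψ e) := by
  intro e _ he
  obtain ⟨ε₁, ε₂, hε, rfl⟩ := Finset.card_eq_two.mp he
  rw [G.complexLevelSetE_pair]
  refine (Finset.eq_empty_or_nonempty _).imp id fun hne =>
    FGraph.isManifold_of_isSphere_unitSphere hne fun x hx => ?_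
  rw [show d - 2 - 1 = d - 3 by ring]
  exact hG.isSphere_unitSphere_levelSet hε hx
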